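/- Finsler GEORCE update scheme: The Finsler GEORCE system has exactly one solution (u, μ), and it is given explicitly by μ_{T−1} = (Σ_{t=0}^{T−1} G_t⁻¹)⁻¹ (2(a − b) − Σ_{t=0}^{T−1} G_t⁻¹ (ζ_t + Σ_{j=t+1}^{T−1} ν_j)), μ_t = μ_{T−1} + Σ_{j=t+1}^{T−1} ν_j for t = 0, …, T−1, and u_t = −(1/2) G_t⁻¹ (μ_{T−1} + ζ_t + Σ_{j=t+1}^{T−1} ν_j) for t = 0, …, T−1. -/
import Mathlib


open Matrix

/-- `∑_{j > t} ν_j`. -/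
noncomputable def sumNuAfter (d T : ℕ) (ν : Fin T → (Fin d → ℝ)) (t : Fin T) :
    Fin d → ℝ :=
  ∑ j ∈ Finset.univ.filter (fun j : Fin T => t < j), ν j

/-- The explicit formula for `μ_{T-1}` in the Finsler case:
`μ_{T-1} = (∑_t G_t⁻¹)⁻¹ (2(a-b) - ∑_t G_t⁻¹ (ζ_t + ∑_{j>t} ν_j))`. -/
noncomputable def muLastF (d T : ℕ) (Gm : Fin T → Matrix (Fin d) (Fin d) ℝ)
    (ν ζ : Fin T → (Fin d → ℝ)) (a b : Fin d → ℝ) : Fin d → ℝ :=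
  (∑ t, (Gm t)⁻¹)⁻¹.mulVec
    ((2 : ℝ) • (a - b) - ∑ t, (Gm t)⁻¹.mulVec (ζ t + sumNuAfter d T ν t))

section Aux

variable {d T : ℕ}

lemma sumNuAfter_last (ν : Fin T → (Fin d → ℝ)) (h : T - 1 < T) :
    sumNuAfter d T ν ⟨T - 1, h⟩ = 0 := by
  unfold sumNuAfter
  rw [Finset.filter_false_of_mem, Finset.sum_empty]
  intro j _
  have := j.isLt
  simp only [Fin.lt_def, not_lt]
  omega

lemma sumNuAfter_succ (ν : Fin T → (Fin d → ℝ)) (t : ℕ) (h : t + 1 < T) :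
    sumNuAfter d T ν ⟨t, Nat.lt_of_succ_lt h⟩
      = ν ⟨t + 1, h⟩ + sumNuAfter d T ν ⟨t + 1, h⟩ := by
  unfold sumNuAfter
  have hins : Finset.univ.filter
        (fun j : Fin T => (⟨t, Nat.lt_of_succ_lt h⟩ : Fin T) < j)
      = insert ⟨t + 1, h⟩
          (Finset.univ.filter (fun j : Fin T => (⟨t + 1, h⟩ : Fin T) < j)) := by
    ext j
    simp only [Finset.mem_insert, Finset.mem_filter, Finset.mem_univ, true_and,
      Fin.lt_def, Fin.ext_iff]
    omega
  rw [hins, Finset.sum_insert (by simp [Fin.lt_def])]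

lemma sum_mulVec' {ι : Type*} (s : Finset ι) (M : ι → Matrix (Fin d) (Fin d) ℝ)
    (v : Fin d → ℝ) :
    (∑ t ∈ s, M t).mulVec v = ∑ t ∈ s, (M t).mulVec v := by
  induction s using Finset.cons_induction with
  | empty => simp [Matrix.zero_mulVec]
  | cons i s hi ih => simp [Matrix.add_mulVec, ih]

end Aux

/-- Finsler GEORCE update scheme: the Finsler GEORCE system
`2 G_t u_t + ζ_t + μ_t = 0`, `ν_t + μ_t = μ_{t-1}`, `∑_t u_t = b - a`
has exactly one solution `(u, μ)`, given explicitly by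
`μ_t = μ_{T-1} + ∑_{j>t} ν_j` and
`u_t = -(1/2) G_t⁻¹ (μ_{T-1} + ζ_t + ∑_{j>t} ν_j)`, with `μ_{T-1}` as in `muLastF`. -/
theorem finsler_georce_update_scheme
    (d T : ℕ) (hd : 1 ≤ d) (hT : 2 ≤ T)
    (Gm : Fin T → Matrix (Fin d) (Fin d) ℝ)
    (hGsym : ∀ t, (Gm t).IsSymm) (hGpos : ∀ t, (Gm t).PosDef)
    (ν ζ : Fin T → (Fin d → ℝ)) (a b : Fin d → ℝ)
    (u μ : Fin T → (Fin d → ℝ)) :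
    ((∀ t, (2 : ℝ) • (Gm t).mulVec (u t) + ζ t + μ t = 0) ∧
      (∀ t : ℕ, ∀ h : t + 1 < T,
        ν ⟨t + 1, h⟩ + μ ⟨t + 1, h⟩ = μ ⟨t, Nat.lt_of_succ_lt h⟩) ∧
      (∑ t, u t = b - a))
    ↔
    ((∀ t, μ t = muLastF d T Gm ν ζ a b + sumNuAfter d T ν t) ∧
      (∀ t, u t = -((1 : ℝ) / 2) •
        (Gm t)⁻¹.mulVec (muLastF d T Gm ν ζ a b + ζ t + sumNuAfter d T ν t))) := by
  classical
  have hTpos : 0 < T := by omega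
  have hL : T - 1 < T := by omega
  set L : Fin T := ⟨T - 1, hL⟩ with hLdef
  set S : Fin T → (Fin d → ℝ) := sumNuAfter d T ν with hSdef
  -- invertibility of each `Gm t`
  have hGdet : ∀ t, IsUnit (Gm t).det := fun t =>
    isUnit_iff_ne_zero.mpr (ne_of_gt (hGpos t).det_pos)
  -- the sum of inverses is positive definite, hence invertible
  have hApos : (∑ t, (Gm t)⁻¹).PosDef := by
    have key : ∀ s : Finset (Fin T), s.Nonempty → (∑ t ∈ s, (Gm t)⁻¹).PosDef := by
      intro s hs
      induction s using Finset.cons_induction with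
      | empty => exact absurd hs (by simp)
      | cons i s hi ih =>
        rw [Finset.sum_cons]
        rcases s.eq_empty_or_nonempty with rfl | hsne
        · simpa using (hGpos i).inv
        · exact ((hGpos i).inv).add (ih hsne)
    exact key Finset.univ ⟨⟨0, hTpos⟩, Finset.mem_univ _⟩
  have hAdet : IsUnit (∑ t, (Gm t)⁻¹).det :=
    isUnit_iff_ne_zero.mpr (ne_of_gt hApos.det_pos)
  set A : Matrix (Fin d) (Fin d) ℝ := ∑ t, (Gm t)⁻¹ with hAdef
  set C : Fin d → ℝ := ∑ t, (Gm t)⁻¹.mulVec (ζ t + S t) with hCdef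
  have hmuL : muLastF d T Gm ν ζ a b = A⁻¹.mulVec ((2 : ℝ) • (a - b) - C) := rfl
  constructor
  · rintro ⟨h1, h2, h3⟩
    -- Step 1: μ t = μ L + S t for all t
    have hstep : ∀ n t (h : t < T), t + n + 1 = T → μ ⟨t, h⟩ = μ L + S ⟨t, h⟩ := by
      intro n
      induction n with
      | zero =>
        intro t h ht
        have : (⟨t, h⟩ : Fin T) = L := by
          simp only [hLdef, Fin.ext_iff]; omega
        rw [this, hSdef, sumNuAfter_last ν hL]
        simp
      | succ n ih =>
        intro t h ht
        have h1' : t + 1 < T := by omega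
        have := ih (t + 1) h1' (by omega)
        rw [← h2 t h1', this, hSdef, sumNuAfter_succ ν t h1']
        abel
    have hmu : ∀ t : Fin T, μ t = μ L + S t := by
      intro t
      have := hstep (T - 1 - t.val) t.val t.isLt (by have := t.isLt; omega)
      simpa using this
    -- Step 2: u t = -(1/2) • G t⁻¹ (ζ t + μ t)
    have hu : ∀ t, u t = -((1 : ℝ) / 2) • (Gm t)⁻¹.mulVec (ζ t + μ t) := by
      intro t
      have e1 : (Gm t).mulVec (u t) = -((1 : ℝ) / 2) • (ζ t + μ t) := by
        have e0 : (2 : ℝ) • (Gm t).mulVec (u t) = -(ζ t + μ t) := by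
          have := h1 t
          rw [add_assoc] at this
          linear_combination (norm := module) this
        calc (Gm t).mulVec (u t)
            = ((1 : ℝ) / 2) • ((2 : ℝ) • (Gm t).mulVec (u t)) := by
              rw [smul_smul]; norm_num
          _ = ((1 : ℝ) / 2) • (-(ζ t + μ t)) := by rw [e0]
          _ = -((1 : ℝ) / 2) • (ζ t + μ t) := by
              rw [smul_neg, neg_smul]
      calc u t = ((Gm t)⁻¹ * Gm t).mulVec (u t) := by
            rw [Matrix.nonsing_inv_mul _ (hGdet t), Matrix.one_mulVec]
        _ = (Gm t)⁻¹.mulVec ((Gm t).mulVec (u t)) := by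
            rw [Matrix.mulVec_mulVec]
        _ = -((1 : ℝ) / 2) • (Gm t)⁻¹.mulVec (ζ t + μ t) := by
            rw [e1, Matrix.mulVec_smul]
    -- Step 3: identify μ L with muLastF
    have hsum : A.mulVec (μ L) = (2 : ℝ) • (a - b) - C := by
      have hexp : b - a = -((1 : ℝ) / 2) • (A.mulVec (μ L) + C) := by
        rw [← h3]
        have : ∀ t : Fin T, u t
            = -((1 : ℝ) / 2) • ((Gm t)⁻¹.mulVec (μ L) + (Gm t)⁻¹.mulVec (ζ t + S t)) := by
          intro t
          rw [hu t, hmu t,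
            show ζ t + (μ L + S t) = μ L + (ζ t + S t) from by abel,
            Matrix.mulVec_add]
        rw [Finset.sum_congr rfl fun t _ => this t, ← Finset.smul_sum,
          Finset.sum_add_distrib, ← hCdef, ← sum_mulVec', ← hAdef]
      have h2' : A.mulVec (μ L) + C = (-2 : ℝ) • (b - a) := by
        rw [hexp, smul_smul]; norm_num
      have : ((-2 : ℝ)) • (b - a) = (2 : ℝ) • (a - b) := by module
      rw [← this]
      linear_combination (norm := module) h2'
    have hmuLval : μ L = muLastF d T Gm ν ζ a b := by
      rw [hmuL, ← hsum]
      calc μ L = (A⁻¹ * A).mulVec (μ L) := by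
            rw [Matrix.nonsing_inv_mul _ hAdet, Matrix.one_mulVec]
        _ = A⁻¹.mulVec (A.mulVec (μ L)) := by rw [Matrix.mulVec_mulVec]
    refine ⟨fun t => by rw [hmu t, hmuLval], fun t => ?_⟩
    rw [hu t, hmu t, hmuLval,
      show ζ t + (muLastF d T Gm ν ζ a b + S t)
        = muLastF d T Gm ν ζ a b + ζ t + S t from by abel]
  · rintro ⟨hmu, hu⟩
    have hAx : A.mulVec (muLastF d T Gm ν ζ a b) = (2 : ℝ) • (a - b) - C := by
      rw [hmuL, Matrix.mulVec_mulVec, Matrix.mul_nonsing_inv _ hAdet,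
        Matrix.one_mulVec]
    refine ⟨fun t => ?_, fun t h => ?_, ?_⟩
    · rw [hu t, hmu t]
      have : (2 : ℝ) • (Gm t).mulVec (-((1 : ℝ) / 2) •
            (Gm t)⁻¹.mulVec (muLastF d T Gm ν ζ a b + ζ t + S t))
          = -((Gm t) * (Gm t)⁻¹).mulVec (muLastF d T Gm ν ζ a b + ζ t + S t) := by
        rw [Matrix.mulVec_smul, smul_smul, ← Matrix.mulVec_mulVec]
        norm_num
      rw [this, Matrix.mul_nonsing_inv _ (hGdet t), Matrix.one_mulVec]
      module
    · rw [hmu ⟨t + 1, h⟩, hmu ⟨t, Nat.lt_of_succ_lt h⟩, hSdef,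
        sumNuAfter_succ ν t h]
      abel
    · have huexp : ∀ t : Fin T, u t
          = -((1 : ℝ) / 2) • ((Gm t)⁻¹.mulVec (muLastF d T Gm ν ζ a b)
            + (Gm t)⁻¹.mulVec (ζ t + S t)) := by
        intro t
        rw [hu t,
          show muLastF d T Gm ν ζ a b + ζ t + S t
            = muLastF d T Gm ν ζ a b + (ζ t + S t) from by abel,
          Matrix.mulVec_add]
      rw [Finset.sum_congr rfl fun t _ => huexp t, ← Finset.smul_sum,
        Finset.sum_add_distrib, ← hCdef, ← sum_mulVec', ← hAdef, hAx]
      module
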